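/- For every non-negative integer s, the (s+1)-st term of the upper central series of the group U_2 of unitriangular automorphisms of A_2 = K⟨x,y⟩ is Z_{s+1}(U_2) = { (x + f(y), y) : f(y) ∈ K⟨y⟩, deg f(y) ≤ s }, i.e. it consists exactly of the automorphisms fixing y and sending x ↦ x + f(y) with f of degree at most s. -/

import Mathlib

/- STATEMENT 7: for every non-negative integer s, the (s+1)-st term of the upper
   central series of U₂ is Z_{s+1}(U₂) = { (x + f(y), y) : f ∈ K⟨y⟩, deg f ≤ s }.
   "deg f ≤ s" is expressed as: f lies in the K-span of the powers yⁱ, i ≤ s.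
   Here x = ι K 0, y = ι K 1. -/

noncomputable section
open FreeAlgebra

abbrev A2 (K : Type) [Field K] := FreeAlgebra K (Fin 2)

private lemma adjoin_stable {K : Type} [Field K]
    (φ : A2 K ≃ₐ[K] A2 K) (b : K)
    (hy : φ (ι K 1) = ι K 1 + algebraMap K (A2 K) b) :
    ∀ u ∈ Algebra.adjoin K ({ι K 1} : Set (A2 K)),
      φ u ∈ Algebra.adjoin K ({ι K 1} : Set (A2 K)) := by
  intro u hu
  induction hu using Algebra.adjoin_induction with
  | mem v hv =>
      rcases hv with rfl
      rw [hy]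
      exact add_mem (Algebra.self_mem_adjoin_singleton K _) (Subalgebra.algebraMap_mem _ _)
  | algebraMap r => rw [AlgEquiv.commutes]; exact Subalgebra.algebraMap_mem _ _
  | add u v _ _ hu hv => rw [map_add]; exact add_mem hu hv
  | mul u v _ _ hu hv => rw [map_mul]; exact mul_mem hu hv

/-- The group `U₂` of unitriangular automorphisms of the free associative algebra
`A₂ = K⟨x,y⟩` (with `x = ι K 0`, `y = ι K 1`): automorphisms sending
`x ↦ x + f(y)`, `y ↦ y + b·1` with `f ∈ K⟨y⟩`, `b ∈ K`. -/
def U2 (K : Type) [Field K] : Subgroup (A2 K ≃ₐ[K] A2 K) where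
  carrier := {φ | ∃ f ∈ Algebra.adjoin K ({ι K 1} : Set (A2 K)), ∃ b : K,
    φ (ι K 0) = ι K 0 + f ∧ φ (ι K 1) = ι K 1 + algebraMap K (A2 K) b}
  one_mem' := ⟨0, Subalgebra.zero_mem _, 0, by simp, by simp⟩
  mul_mem' := by
    rintro φ ψ ⟨f, hf, b, hfx, hfy⟩ ⟨h, hh, c, hhx, hhy⟩
    refine ⟨f + φ h, add_mem hf (adjoin_stable φ b hfy h hh), b + c, ?_, ?_⟩
    · show φ (ψ (ι K 0)) = _
      rw [hhx, map_add, hfx, add_assoc]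
    · show φ (ψ (ι K 1)) = _
      rw [hhy, map_add, hfy, AlgEquiv.commutes, map_add, add_assoc]
  inv_mem' := by
    rintro φ ⟨f, hf, b, hfx, hfy⟩
    have hsy : φ.symm (ι K 1) = ι K 1 + algebraMap K (A2 K) (-b) := by
      have h1 := congrArg φ.symm hfy
      rw [AlgEquiv.symm_apply_apply, map_add, AlgEquiv.commutes] at h1
      rw [eq_sub_of_add_eq h1.symm, map_neg, sub_eq_add_neg]
    have hsx : φ.symm (ι K 0) = ι K 0 + (-(φ.symm f)) := by
      have h1 := congrArg φ.symm hfx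
      rw [AlgEquiv.symm_apply_apply, map_add] at h1
      rw [eq_sub_of_add_eq h1.symm, sub_eq_add_neg]
    exact ⟨-(φ.symm f), neg_mem (adjoin_stable φ.symm (-b) hsy f hf), -b, hsx, hsy⟩

/-
Write `(p, b)` for the automorphism `x ↦ x + p(y)`, `y ↦ y + b`. Composition reads
`(p, b) ∘ (q, c) = (p + q(y + b), b + c)`, so every commutator lies in the normal subgroup
`b = 0`, with polynomial part `(q(y + b) - q) - (p(y + c) - p)`. In characteristic zero the
difference `p(y + c) - p` with `c ≠ 0` has degree exactly `deg p - 1`. Hence, by induction on `s`,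
`Z_s = {(p, 0) : deg p < s}`: commuting with `(y^(s+1), 0)` forces `b = 0`, and commuting with
`(0, 1)` lowers the degree of `p` by exactly one.
-/

namespace Polynomial

variable {R : Type*} [CommRing R]

theorem taylor_sub_self_mem_degreeLT {n : ℕ} {p : R[X]} (hp : p ∈ degreeLE R n) (r : R) :
    taylor r p - p ∈ degreeLT R n := by
  rw [mem_degreeLE] at hp
  rw [mem_degreeLT]
  rcases eq_or_ne p 0 with rfl | hp0
  · simp
  · exact (degree_sub_lt_left (degree_taylor p r) ((taylor_eq_zero r p).not.mpr hp0)
      (leadingCoeff_taylor r p)).trans_le ((degree_taylor p r).trans_le hp)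

theorem coeff_taylor_of_natDegree_eq_succ {p : R[X]} {n : ℕ} (hn : p.natDegree = n + 1)
    (r : R) : (taylor r p).coeff n = p.coeff n + (n + 1) * p.leadingCoeff * r := by
  have hdeg : (hasseDeriv n p).natDegree < 2 :=
    (natDegree_hasseDeriv_le p n).trans_lt (by omega)
  rw [taylor_coeff, eval_eq_sum_range' hdeg, Finset.sum_range_succ, Finset.sum_range_one,
    hasseDeriv_coeff, hasseDeriv_coeff, leadingCoeff, hn, add_comm 1 n,
    Nat.choose_succ_self_right]
  simp

theorem mem_degreeLE_of_taylor_sub_self_mem_degreeLT [IsDomain R] [CharZero R] {n : ℕ}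
    {p : R[X]} {r : R} (hr : r ≠ 0) (h : taylor r p - p ∈ degreeLT R n) :
    p ∈ degreeLE R n := by
  rw [mem_degreeLE, ← natDegree_le_iff_degree_le]
  by_contra! hlt
  obtain ⟨m, hm⟩ : ∃ m, p.natDegree = m + 1 := ⟨p.natDegree - 1, by omega⟩
  have hp0 : p ≠ 0 := by rintro rfl; simp at hm
  have hcoeff : (taylor r p - p).coeff m ≠ 0 := by
    rw [coeff_sub, coeff_taylor_of_natDegree_eq_succ hm, add_sub_cancel_left]
    exact mul_ne_zero (mul_ne_zero (Nat.cast_add_one_ne_zero m)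
      (leadingCoeff_ne_zero.mpr hp0)) hr
  exact hcoeff (coeff_eq_zero_of_degree_lt ((mem_degreeLT.mp h).trans_le
    (by exact_mod_cast (by omega : n ≤ m))))

end Polynomial

open Polynomial
open scoped commutatorElement

theorem commutatorElement_mul_mul_swap {G : Type*} [Group G] (g h : G) :
    ⁅g, h⁆ * (h * g) = g * h := by
  rw [commutatorElement_def]
  group

namespace U2

variable {K : Type} [Field K]

def polyY (K : Type) [Field K] : K[X] →ₐ[K] A2 K := aeval (ι K 1)

theorem polyY_injective : Function.Injective (polyY K) := by
  have hinv : (FreeAlgebra.lift K ![0, X]).comp (polyY K) = AlgHom.id K K[X] := by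
    ext; simp [polyY]
  exact Function.LeftInverse.injective (AlgHom.congr_fun hinv)

theorem range_polyY : (polyY K).range = Algebra.adjoin K {ι K 1} :=
  (Algebra.adjoin_singleton_eq_range_aeval K (ι K 1)).symm

theorem map_polyY {φ : A2 K →ₐ[K] A2 K} {b : K}
    (hy : φ (ι K 1) = ι K 1 + algebraMap K (A2 K) b) (p : K[X]) :
    φ (polyY K p) = polyY K (taylor b p) := by
  have : φ.comp (polyY K) = (polyY K).comp (taylorAlgHom b) := by
    ext; simp [polyY, hy]
  exact AlgHom.congr_fun this p

def IsUnitriangular (φ : A2 K →ₐ[K] A2 K) (p : K[X]) (b : K) : Prop :=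
  φ (ι K 0) = ι K 0 + polyY K p ∧ φ (ι K 1) = ι K 1 + algebraMap K (A2 K) b

theorem isUnitriangular_id : IsUnitriangular (AlgHom.id K (A2 K)) 0 0 := by
  simp [IsUnitriangular]

namespace IsUnitriangular

variable {φ ψ : A2 K →ₐ[K] A2 K} {p q : K[X]} {b c : K}

theorem comp (hφ : IsUnitriangular φ p b) (hψ : IsUnitriangular ψ q c) :
    IsUnitriangular (φ.comp ψ) (p + taylor b q) (b + c) := by
  constructor
  · rw [AlgHom.comp_apply, hψ.1, map_add, hφ.1, map_polyY hφ.2, map_add, add_assoc]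
  · rw [AlgHom.comp_apply, hψ.2, map_add, hφ.2, AlgHom.commutes, map_add, add_assoc]

theorem unique (hp : IsUnitriangular φ p b) (hq : IsUnitriangular φ q c) : p = q ∧ b = c :=
  ⟨polyY_injective (add_left_cancel (hp.1.symm.trans hq.1)),
    (FreeAlgebra.algebraMap_inj b c).mp (add_left_cancel (hp.2.symm.trans hq.2))⟩

theorem ext (hφ : IsUnitriangular φ p b) (hψ : IsUnitriangular ψ p b) : φ = ψ := by
  apply FreeAlgebra.hom_ext
  funext i
  fin_cases i
  exacts [hφ.1.trans hψ.1.symm, hφ.2.trans hψ.2.symm]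

end IsUnitriangular

def unitriangular (p : K[X]) (b : K) : A2 K →ₐ[K] A2 K :=
  FreeAlgebra.lift K ![ι K 0 + polyY K p, ι K 1 + algebraMap K (A2 K) b]

theorem isUnitriangular_unitriangular (p : K[X]) (b : K) :
    IsUnitriangular (unitriangular p b) p b := by
  simp [IsUnitriangular, unitriangular]

theorem unitriangular_comp_unitriangular_neg (p : K[X]) (b : K) :
    (unitriangular p b).comp (unitriangular (-taylor (-b) p) (-b)) = AlgHom.id K (A2 K) := by
  refine ((isUnitriangular_unitriangular _ _).comp (isUnitriangular_unitriangular _ _)).ext ?_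
  simpa [taylor_taylor] using isUnitriangular_id

def mk (p : K[X]) (b : K) : U2 K :=
  ⟨AlgEquiv.ofAlgHom (unitriangular p b) (unitriangular (-taylor (-b) p) (-b))
    (unitriangular_comp_unitriangular_neg p b)
    (by simpa [taylor_taylor] using unitriangular_comp_unitriangular_neg (-taylor (-b) p) (-b)),
    polyY K p, range_polyY (K := K) ▸ AlgHom.mem_range_self _ p, b,
    isUnitriangular_unitriangular p b⟩

theorem exists_isUnitriangular (g : U2 K) :
    ∃ p b, IsUnitriangular (g : A2 K ≃ₐ[K] A2 K).toAlgHom p b := by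
  obtain ⟨f, hf, b, hx, hy⟩ := g.2
  rw [← range_polyY] at hf
  obtain ⟨p, rfl⟩ := hf
  exact ⟨p, b, hx, hy⟩

def xPoly (g : U2 K) : K[X] := (exists_isUnitriangular g).choose

def yShift (g : U2 K) : K := (exists_isUnitriangular g).choose_spec.choose

theorem isUnitriangular (g : U2 K) :
    IsUnitriangular (g : A2 K ≃ₐ[K] A2 K).toAlgHom (xPoly g) (yShift g) :=
  (exists_isUnitriangular g).choose_spec.choose_spec

theorem eq_one_iff {g : U2 K} : g = 1 ↔ xPoly g = 0 ∧ yShift g = 0 := by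
  refine ⟨fun h => h ▸ (isUnitriangular 1).unique isUnitriangular_id, fun ⟨hp, hb⟩ => ?_⟩
  refine Subtype.ext (AlgEquiv.coe_toAlgHom_injective ((isUnitriangular g).ext ?_))
  rw [hp, hb]
  exact isUnitriangular_id

theorem xPoly_mul (g h : U2 K) : xPoly (g * h) = xPoly g + taylor (yShift g) (xPoly h) :=
  ((isUnitriangular (g * h)).unique ((isUnitriangular g).comp (isUnitriangular h))).1

theorem yShift_mul (g h : U2 K) : yShift (g * h) = yShift g + yShift h :=
  ((isUnitriangular (g * h)).unique ((isUnitriangular g).comp (isUnitriangular h))).2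

theorem xPoly_mk (p : K[X]) (b : K) : xPoly (mk p b) = p :=
  ((isUnitriangular (mk p b)).unique (isUnitriangular_unitriangular p b)).1

theorem yShift_mk (p : K[X]) (b : K) : yShift (mk p b) = b :=
  ((isUnitriangular (mk p b)).unique (isUnitriangular_unitriangular p b)).2

theorem yShift_commutator (g h : U2 K) : yShift ⁅g, h⁆ = 0 := by
  have := yShift_mul ⁅g, h⁆ (h * g)
  rw [commutatorElement_mul_mul_swap, yShift_mul, yShift_mul] at this
  linear_combination -this

theorem xPoly_commutator (g h : U2 K) :
    xPoly ⁅g, h⁆ = (taylor (yShift g) (xPoly h) - xPoly h) -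
      (taylor (yShift h) (xPoly g) - xPoly g) := by
  have := xPoly_mul ⁅g, h⁆ (h * g)
  rw [commutatorElement_mul_mul_swap, xPoly_mul, xPoly_mul, yShift_commutator,
    taylor_zero] at this
  linear_combination -this

theorem mem_upperCentralSeries_iff [CharZero K] {s : ℕ} {g : U2 K} :
    g ∈ Subgroup.upperCentralSeries (U2 K) s ↔ yShift g = 0 ∧ xPoly g ∈ degreeLT K s := by
  induction s generalizing g with
  | zero =>
    simp [Subgroup.upperCentralSeries_zero, eq_one_iff, mem_degreeLT, and_comm]
  | succ s ih =>
    simp only [Subgroup.mem_upperCentralSeries_succ_iff, ih, yShift_commutator, xPoly_commutator,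
      true_and, degreeLT_succ_eq_degreeLE]
    constructor
    · intro H
      have hb : yShift g = 0 := by
        by_contra hb
        have hpow := H (mk (X ^ (s + 1)) 0)
        rw [xPoly_mk, yShift_mk, taylor_zero, sub_self, sub_zero] at hpow
        have := mem_degreeLE_of_taylor_sub_self_mem_degreeLT hb hpow
        rw [mem_degreeLE, degree_X_pow, Nat.cast_le] at this
        omega
      have hshift := H (mk 0 1)
      rw [xPoly_mk, yShift_mk, hb, taylor_zero, sub_self, zero_sub, neg_mem_iff] at hshift
      exact ⟨hb, mem_degreeLE_of_taylor_sub_self_mem_degreeLT one_ne_zero hshift⟩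
    · rintro ⟨hb, hp⟩ h
      rw [hb, taylor_zero, sub_self, zero_sub, neg_mem_iff]
      exact taylor_sub_self_mem_degreeLT hp _

theorem polyY_mem_span_pow_iff {s : ℕ} {p : K[X]} :
    polyY K p ∈ Submodule.span K ((fun i : ℕ => (ι K 1 : A2 K) ^ i) '' Set.Iic s) ↔
      p ∈ degreeLE K s := by
  classical
  have hspan : Submodule.span K ((fun i : ℕ => (ι K 1 : A2 K) ^ i) '' Set.Iic s) =
      (degreeLE K s).map (polyY K).toLinearMap := by
    rw [degreeLE_eq_span_X_pow, Submodule.map_span, Finset.coe_image, Finset.coe_range,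
      Set.image_image]
    congr 1
    ext
    simp [polyY]
  rw [hspan, ← SetLike.mem_coe, Submodule.map_coe]
  exact polyY_injective.mem_set_image

end U2

theorem upperCentralSeries_U2 (K : Type) [Field K] [CharZero K] (s : ℕ) (φ : U2 K) :
    φ ∈ upperCentralSeries ↥(U2 K) (s + 1) ↔
      ∃ f ∈ Submodule.span K ((fun i : ℕ => (ι K 1 : A2 K) ^ i) '' Set.Iic s),
        (φ : A2 K ≃ₐ[K] A2 K) (ι K 0) = ι K 0 + f ∧
        (φ : A2 K ≃ₐ[K] A2 K) (ι K 1) = ι K 1 := by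
  refine U2.mem_upperCentralSeries_iff.trans ?_
  rw [degreeLT_succ_eq_degreeLE]
  have hx : (φ : A2 K ≃ₐ[K] A2 K) (ι K 0) = _ := (U2.isUnitriangular φ).1
  have hy : (φ : A2 K ≃ₐ[K] A2 K) (ι K 1) = _ := (U2.isUnitriangular φ).2
  constructor
  · rintro ⟨hb, hp⟩
    refine ⟨_, U2.polyY_mem_span_pow_iff.mpr hp, hx, ?_⟩
    rw [hy, hb, map_zero, add_zero]
  · rintro ⟨f, hf, hfx, hfy⟩
    obtain rfl : U2.polyY K (U2.xPoly φ) = f := add_left_cancel (hx.symm.trans hfx)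
    exact ⟨(FreeAlgebra.algebraMap_eq_zero_iff _).mp (add_eq_left.mp (hy.symm.trans hfy)),
      U2.polyY_mem_span_pow_iff.mp hf⟩
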